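/- Let Z be a finite set of points in a pseudometric space where each point z is labeled with a nonempty subset L(z) of [m], and suppose that whenever L(x) ⊆ L(y) or L(y) ⊆ L(x) for distinct x,y ∈ Z, we have d(x,y) ≥ M·d₂, where M = C(m, floor(m/2)). Form the graph G_Z on Z with edges between points at distance < d₂. Then any two points x,y in the same connected component satisfy d(x,y) < (M−1)·d₂, and no component contains two points with comparable label sets. -/

import Mathlib

/-!
Consecutive vertices of a path in `G_Z` are less than `d₂` apart, so any two of the first `M + 1`
vertices of a path with at least `M` edges are less than `M·d₂` apart. By Sperner's theorem two of
these `M + 1` distinct vertices have comparable labels, contradicting the separation hypothesis.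
Hence every path has at most `M - 1` edges, and its endpoints are less than `(M - 1)·d₂` apart.
-/

theorem Finset.card_le_choose_of_pairwise_not_subset {ι α : Type*} [Fintype α] {s : Finset ι}
    {L : ι → Finset α} (hs : (s : Set ι).Pairwise fun i j => ¬ L i ⊆ L j) :
    s.card ≤ (Fintype.card α).choose (Fintype.card α / 2) := by
  classical
  have hinj : Set.InjOn L s := fun i hi j hj hij => by
    by_contra hne
    exact hs hi hj hne hij.subset
  rw [← Finset.card_image_of_injOn hinj]
  apply IsAntichain.sperner
  rw [Finset.coe_image]
  rintro _ ⟨i, hi, rfl⟩ _ ⟨j, hj, rfl⟩ hne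
  exact hs hi hj fun h => hne (congrArg L h)

theorem dist_lt_mul_of_dist_succ_lt {α : Type*} [PseudoMetricSpace α] {f : ℕ → α} {d : ℝ}
    {m n : ℕ} (hmn : m < n) (hf : ∀ k, m ≤ k → k < n → dist (f k) (f (k + 1)) < d) :
    dist (f m) (f n) < (n - m : ℕ) * d :=
  calc dist (f m) (f n) ≤ ∑ k ∈ Finset.Ico m n, dist (f k) (f (k + 1)) :=
        dist_le_Ico_sum_dist f hmn.le
    _ < ∑ _k ∈ Finset.Ico m n, d := Finset.sum_lt_sum_of_nonempty (Finset.nonempty_Ico.2 hmn)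
        fun k hk => hf k (Finset.mem_Ico.1 hk).1 (Finset.mem_Ico.1 hk).2
    _ = (n - m : ℕ) * d := by simp

section WalkDist

variable {V : Type*} [PseudoMetricSpace V] {G : SimpleGraph V} {d : ℝ}

theorem dist_getVert_lt_of_adj (hG : ∀ u v, G.Adj u v → dist u v < d) {u v : V}
    (p : G.Walk u v) {i j : ℕ} (hij : i < j) (hj : j ≤ p.length) :
    dist (p.getVert i) (p.getVert j) < (j - i : ℕ) * d :=
  dist_lt_mul_of_dist_succ_lt hij fun _ _ hk => hG _ _ (p.adj_getVert_succ (hk.trans_le hj))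

theorem dist_lt_length_mul_of_adj (hG : ∀ u v, G.Adj u v → dist u v < d) {u v : V}
    (p : G.Walk u v) (hp : 0 < p.length) : dist u v < p.length * d := by
  simpa using dist_getVert_lt_of_adj hG p hp le_rfl

theorem length_lt_choose_of_isPath {α : Type*} [Fintype α] {L : V → Finset α}
    (hG : ∀ u v, G.Adj u v → dist u v < d) (hd : 0 ≤ d)
    (hsep : ∀ x y, x ≠ y → L x ⊆ L y →
      ((Fintype.card α).choose (Fintype.card α / 2) : ℝ) * d ≤ dist x y)
    {u v : V} {p : G.Walk u v} (hp : p.IsPath) :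
    p.length < (Fintype.card α).choose (Fintype.card α / 2) := by
  set M := (Fintype.card α).choose (Fintype.card α / 2)
  by_contra! hM
  have close : ∀ i j, i < j → j ≤ M → dist (p.getVert i) (p.getVert j) < M * d :=
    fun i j hij hj => (dist_getVert_lt_of_adj hG p hij (hj.trans hM)).trans_le <|
      mul_le_mul_of_nonneg_right (by exact_mod_cast (Nat.sub_le j i).trans hj) hd
  have incomparable : (Finset.range (M + 1) : Set ℕ).Pairwise
      fun i j => ¬ L (p.getVert i) ⊆ L (p.getVert j) := by
    intro i hi j hj hij hsub
    simp only [Finset.coe_range, Set.mem_Iio] at hi hj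
    have hne : p.getVert i ≠ p.getVert j := fun h =>
      hij (hp.getVert_injOn (by simp; omega) (by simp; omega) h)
    have far := hsep _ _ hne hsub
    rcases hij.lt_or_gt with h | h
    · linarith [close i j h (by omega)]
    · linarith [close j i h (by omega), dist_comm (p.getVert i) (p.getVert j)]
  exact (Finset.card_le_choose_of_pairwise_not_subset incomparable).not_gt (by simp [M])

end WalkDist

theorem component_width_overlap_general {U : Type*} [PseudoMetricSpace U]
    (m : ℕ) (d₂ : ℝ) (hd₂ : 0 < d₂)
    (Z : Finset U) (L : U → Finset (Fin m))
    (hsep : ∀ x ∈ Z, ∀ y ∈ Z, x ≠ y → (L x ⊆ L y ∨ L y ⊆ L x) →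
      (m.choose (m / 2) : ℝ) * d₂ ≤ dist x y)
    (G : SimpleGraph {z // z ∈ Z})
    (hG : ∀ a b : {z // z ∈ Z}, G.Adj a b ↔ (a ≠ b ∧ dist (a : U) (b : U) < d₂)) :
    ∀ a b : {z // z ∈ Z}, a ≠ b → G.Reachable a b →
      dist (a : U) (b : U) < ((m.choose (m / 2) : ℝ) - 1) * d₂ ∧
      ¬(L (a : U) ⊆ L (b : U) ∨ L (b : U) ⊆ L (a : U)) := by
  classical
  rintro a b hab ⟨w⟩
  have hadj : ∀ u v, G.Adj u v → dist u v < d₂ := fun u v h => ((hG u v).1 h).2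
  have hsepZ : ∀ x y : {z // z ∈ Z}, x ≠ y → L x ⊆ L y → (m.choose (m / 2) : ℝ) * d₂ ≤ dist x y :=
    fun x y hxy hsub => hsep x x.2 y y.2 (Subtype.coe_ne_coe.2 hxy) (Or.inl hsub)
  obtain ⟨p, hp⟩ := w.toPath
  have hlen : p.length + 1 ≤ m.choose (m / 2) := by
    simpa using length_lt_choose_of_isPath (L := fun z : {z // z ∈ Z} => L z) hadj hd₂.le
      (by simpa using hsepZ) hp
  have hlen' : (p.length : ℝ) ≤ m.choose (m / 2) - 1 := by
    rw [le_sub_iff_add_le]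
    exact_mod_cast hlen
  have hpos : 0 < p.length := Nat.pos_of_ne_zero fun h => hab (p.eq_of_length_eq_zero h)
  have hdist : dist (a : U) b < ((m.choose (m / 2) : ℝ) - 1) * d₂ :=
    (dist_lt_length_mul_of_adj hadj p hpos).trans_le (mul_le_mul_of_nonneg_right hlen' hd₂.le)
  refine ⟨hdist, fun hcomp => ?_⟩
  linarith [hsep a a.2 b b.2 (Subtype.coe_ne_coe.2 hab) hcomp]

/-- Lemma 2 (overlapping groups): with `M = C(m, ⌊m/2⌋)`, if any two distinct points with
comparable label sets are at distance at least `M·d₂`, then in the graph joining points at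
distance `< d₂`, any two distinct points in the same connected component are at distance
`< (M-1)·d₂` and have incomparable label sets. -/
theorem component_width_overlap {U : Type*} [PseudoMetricSpace U]
    (m : ℕ) (hm : 1 ≤ m) (d₂ : ℝ) (hd₂ : 0 < d₂)
    (Z : Finset U) (L : U → Finset (Fin m))
    (hL : ∀ z ∈ Z, (L z).Nonempty)
    (hsep : ∀ x ∈ Z, ∀ y ∈ Z, x ≠ y → (L x ⊆ L y ∨ L y ⊆ L x) →
      (m.choose (m / 2) : ℝ) * d₂ ≤ dist x y)
    (G : SimpleGraph {z // z ∈ Z})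
    (hG : ∀ a b : {z // z ∈ Z}, G.Adj a b ↔ (a ≠ b ∧ dist (a : U) (b : U) < d₂)) :
    ∀ a b : {z // z ∈ Z}, a ≠ b → G.Reachable a b →
      dist (a : U) (b : U) < ((m.choose (m / 2) : ℝ) - 1) * d₂ ∧
      ¬(L (a : U) ⊆ L (b : U) ∨ L (b : U) ⊆ L (a : U)) :=
  component_width_overlap_general m d₂ hd₂ Z L hsep G hG
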